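/- If M,w ⊨ ⟨α₁⟩…⟨α_k⟩ψ for a PDL model M with k > 0, then there exists a witness chain for (⟨α₁⟩…⟨α_k⟩ψ, ψ, M, w): a finite sequence (w_0,ψ_0),…,(w_n,ψ_n) with n > 0 such that each ψ_i is in Pre(ψ) (i.e. of the form ⟨β₁⟩…⟨β_m⟩ψ), M,w_i ⊨ ψ_i for all i, w_0 = w, ψ_0 = ⟨α₁⟩…⟨α_k⟩ψ, ψ_n = ψ, ψ_i ≠ ψ for i < n, no pair repeats, and each step either follows an atomic-program transition (ψ_i = ⟨a⟩χ, ψ_{i+1} = χ, w_i R_a w_{i+1}) or is a single ⇝-reduction step at the same world. -/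

import Mathlib

mutual
  inductive Fml : Type
    | atom : ℕ → Fml
    | neg  : Fml → Fml
    | and  : Fml → Fml → Fml
    | or   : Fml → Fml → Fml
    | dia  : Prg → Fml → Fml
    | box  : Prg → Fml → Fml
  inductive Prg : Type
    | atom  : ℕ → Prg
    | seq   : Prg → Prg → Prg
    | union : Prg → Prg → Prg
    | star  : Prg → Prg
    | test  : Fml → Prg
end

/-- A PDL model: worlds, relations for atomic programs, valuation. -/
structure Model where
  W : Type
  R : ℕ → W → W → Prop
  V : ℕ → W → Prop

mutual
  /-- Truth of a formula at a world. -/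
  def Model.sat (M : Model) : M.W → Fml → Prop
    | w, .atom p  => M.V p w
    | w, .neg φ   => ¬ M.sat w φ
    | w, .and φ ψ => M.sat w φ ∧ M.sat w ψ
    | w, .or φ ψ  => M.sat w φ ∨ M.sat w ψ
    | w, .dia α φ => ∃ v, M.rel α w v ∧ M.sat v φ
    | w, .box α φ => ∀ v, M.rel α w v → M.sat v φ
  /-- Interpretation of programs as binary relations. -/
  def Model.rel (M : Model) : Prg → M.W → M.W → Prop
    | .atom a, w, v    => M.R a w v
    | .seq α β, w, v   => ∃ u, M.rel α w u ∧ M.rel β u v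
    | .union α β, w, v => M.rel α w v ∨ M.rel β w v
    | .star α, w, v    => Relation.ReflTransGen (fun x y => M.rel α x y) w v
    | .test φ, w, v    => w = v ∧ M.sat w φ
end

/-- The reduction relation ⇝ on diamond formulae. -/
inductive Red : Fml → Fml → Prop
  | seq (α β : Prg) (χ : Fml) : Red (.dia (.seq α β) χ) (.dia α (.dia β χ))
  | unionL (α β : Prg) (χ : Fml) : Red (.dia (.union α β) χ) (.dia α χ)
  | unionR (α β : Prg) (χ : Fml) : Red (.dia (.union α β) χ) (.dia β χ)
  | star1 (α : Prg) (χ : Fml) : Red (.dia (.star α) χ) χ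
  | star2 (α : Prg) (χ : Fml) : Red (.dia (.star α) χ) (.dia α (.dia (.star α) χ))
  | test (ψ χ : Fml) : Red (.dia (.test ψ) χ) χ

/-- Pre φ : formulae of the form ⟨β₁⟩…⟨β_m⟩φ with m ≥ 0. -/
inductive Pre (φ : Fml) : Fml → Prop
  | base : Pre φ φ
  | dia (α : Prg) {ψ : Fml} : Pre φ ψ → Pre φ (.dia α ψ)

/-- ⟨α₁⟩…⟨α_k⟩ψ for a list of programs. -/
def dias : List Prg → Fml → Fml
  | [], φ => φ
  | α :: L, φ => .dia α (dias L φ)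

/-- A witness chain for (φ, ψ, M, w), with data (n, ws, ψs). -/
def IsWitnessChain (M : Model) (φ ψ : Fml) (w : M.W)
    (n : ℕ) (ws : ℕ → M.W) (ψs : ℕ → Fml) : Prop :=
  0 < n ∧
  (∀ i ≤ n, Pre ψ (ψs i) ∧ M.sat (ws i) (ψs i)) ∧
  ws 0 = w ∧ ψs 0 = φ ∧ ψs n = ψ ∧ (∀ i < n, ψs i ≠ ψ) ∧
  (∀ i ≤ n, ∀ j ≤ n, i ≠ j → (ws i, ψs i) ≠ (ws j, ψs j)) ∧
  (∀ i < n,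
    (∀ (a : ℕ) (χ : Fml), ψs i = Fml.dia (.atom a) χ →
        ψs (i+1) = χ ∧ M.R a (ws i) (ws (i+1))) ∧
    ((∀ (a : ℕ) (χ : Fml), ψs i ≠ Fml.dia (.atom a) χ) →
        Red (ψs i) (ψs (i+1)) ∧ ws i = ws (i+1)))

/-!
A true diamond `⟨α⟩φ` at `w` with witness `v` unfolds, by recursion on `α` (and along the
`α`-path for `α*`), into ⇝-steps and atomic transitions leading from `(w, ⟨α⟩φ)` to `(v, φ)`
through pairs whose formula is true at their world and lies in `Pre ψ`. Composing these for
`α₁, …, α_k` reaches some `(v, ψ)`; a shortest such path visits no pair twice and meets `ψ` only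
at its end, and it is nontrivial because `⟨α₁⟩…⟨α_k⟩ψ ≠ ψ`.
-/

namespace Relation

variable {P : Type*} {r : P → P → Prop}

theorem ReflTransGen.exists_path {a b : P} (h : ReflTransGen r a b) :
    ∃ (n : ℕ) (f : ℕ → P), f 0 = a ∧ f n = b ∧ ∀ i < n, r (f i) (f (i + 1)) := by
  induction h with
  | refl => exact ⟨0, fun _ => a, rfl, rfl, fun _ h => absurd h (Nat.not_lt_zero _)⟩
  | @tail b c _ hbc ih =>
    obtain ⟨n, f, h0, hn, hf⟩ := ih
    refine ⟨n + 1, fun i => if i ≤ n then f i else c, by simpa using h0, by simp,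
      fun i hi => ?_⟩
    rcases Nat.lt_succ_iff_lt_or_eq.mp hi with hi | rfl
    · simpa [hi.le, Nat.succ_le_of_lt hi] using hf i hi
    · simpa [hn] using hbc

theorem exists_path_of_loop {n i j : ℕ} {f : ℕ → P} (hf : ∀ k < n, r (f k) (f (k + 1)))
    (hij : i < j) (hjn : j ≤ n) (hloop : f i = f j) :
    ∃ g : ℕ → P,
      g 0 = f 0 ∧ g (n - (j - i)) = f n ∧ ∀ k < n - (j - i), r (g k) (g (k + 1)) := by
  refine ⟨fun k => if k ≤ i then f k else f (k + (j - i)), by simp, ?_, fun k hk => ?_⟩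
  · dsimp only
    split_ifs with h
    · obtain rfl : j = n := by omega
      simpa [show j - (j - i) = i by omega] using hloop
    · rw [Nat.sub_add_cancel (by omega)]
  · rcases lt_trichotomy k i with hki | rfl | hik
    · simpa [hki.le, Nat.succ_le_of_lt hki] using hf k (by omega)
    · simpa [hloop, show k + 1 + (j - k) = j + 1 by omega] using hf j (by omega)
    · simpa [show ¬ k ≤ i by omega, show ¬ k + 1 ≤ i by omega,
        show k + 1 + (j - i) = k + (j - i) + 1 by omega] using hf (k + (j - i)) (by omega)

theorem exists_shortest_path {p : P → Prop} {a b : P} (hb : p b) (h : ReflTransGen r a b) :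
    ∃ (n : ℕ) (f : ℕ → P), f 0 = a ∧ p (f n) ∧ (∀ i < n, r (f i) (f (i + 1))) ∧
      (∀ i < n, ¬ p (f i)) ∧ ∀ i ≤ n, ∀ j ≤ n, f i = f j → i = j := by
  classical
  have hex : ∃ n, ∃ f : ℕ → P, f 0 = a ∧ p (f n) ∧ ∀ i < n, r (f i) (f (i + 1)) := by
    obtain ⟨n, f, h0, hn, hf⟩ := h.exists_path
    exact ⟨n, f, h0, hn ▸ hb, hf⟩
  obtain ⟨f, h0, hn, hf⟩ := Nat.find_spec hex
  refine ⟨Nat.find hex, f, h0, hn, hf, fun i hi hpi => ?_, ?_⟩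
  · exact Nat.find_min hex hi ⟨f, h0, hpi, fun k hk => hf k (hk.trans hi)⟩
  · have hloop : ∀ i j, i < j → j ≤ Nat.find hex → f i ≠ f j := by
      intro i j hij hj hfij
      obtain ⟨g, g0, gn, hg⟩ := exists_path_of_loop hf hij hj hfij
      exact Nat.find_min hex (by omega) ⟨g, g0.trans h0, gn ▸ hn, hg⟩
    intro i hi j hj hfij
    by_contra hne
    rcases Nat.lt_or_gt_of_ne hne with hlt | hlt
    · exact hloop i j hlt hj hfij
    · exact hloop j i hlt hi hfij.symm

end Relation

theorem Pre.sizeOf_le {ψ φ : Fml} (h : Pre ψ φ) : sizeOf ψ ≤ sizeOf φ := by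
  induction h with
  | base => rfl
  | dia α _ ih => simp only [Fml.dia.sizeOf_spec]; omega

theorem pre_dias (L : List Prg) (ψ : Fml) : Pre ψ (dias L ψ) := by
  induction L with
  | nil => exact Pre.base
  | cons α L ih => exact Pre.dia α ih

theorem dias_cons_ne (α : Prg) (L : List Prg) (ψ : Fml) : dias (α :: L) ψ ≠ ψ := by
  intro h
  have := congrArg sizeOf h
  have := (pre_dias L ψ).sizeOf_le
  simp only [dias, Fml.dia.sizeOf_spec] at *
  omega

theorem Red.not_dia_atom {a : ℕ} {χ φ : Fml} : ¬ Red (.dia (.atom a) χ) φ := nofun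

namespace Model

variable (M : Model)

def ChainStep (p q : M.W × Fml) : Prop :=
  (∃ a, p.2 = .dia (.atom a) q.2 ∧ M.R a p.1 q.1) ∨ (Red p.2 q.2 ∧ p.1 = q.1)

def WitnessStep (ψ : Fml) (p q : M.W × Fml) : Prop :=
  M.ChainStep p q ∧ M.sat q.1 q.2 ∧ Pre ψ q.2

variable {M}

theorem ChainStep.atom_or_red {p q : M.W × Fml} (h : M.ChainStep p q) :
    (∀ (a : ℕ) (χ : Fml), p.2 = .dia (.atom a) χ → q.2 = χ ∧ M.R a p.1 q.1) ∧
    ((∀ (a : ℕ) (χ : Fml), p.2 ≠ .dia (.atom a) χ) → Red p.2 q.2 ∧ p.1 = q.1) := by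
  rcases h with ⟨a, hp, hR⟩ | ⟨hred, hw⟩
  · refine ⟨fun b χ hb => ?_, fun hna => absurd hp (hna a q.2)⟩
    obtain ⟨rfl, rfl⟩ : a = b ∧ q.2 = χ := by simpa [hp] using hb
    exact ⟨rfl, hR⟩
  · refine ⟨fun b χ hb => absurd (hb ▸ hred) Red.not_dia_atom, fun _ => ⟨hred, hw⟩⟩

theorem witnessStep_of_red {ψ φ φ' : Fml} {w : M.W} (hred : Red φ φ') (hs : M.sat w φ')
    (hp : Pre ψ φ') : M.WitnessStep ψ (w, φ) (w, φ') :=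
  ⟨Or.inr ⟨hred, rfl⟩, hs, hp⟩

theorem reflTransGen_witnessStep_dia {ψ φ : Fml} {w v : M.W} (α : Prg) (hr : M.rel α w v)
    (hs : M.sat v φ) (hp : Pre ψ φ) :
    Relation.ReflTransGen (M.WitnessStep ψ) (w, .dia α φ) (v, φ) := by
  match α with
  | .atom a => exact .single ⟨Or.inl ⟨a, rfl, hr⟩, hs, hp⟩
  | .seq α β =>
    obtain ⟨u, hwu, huv⟩ := hr
    have hsu : M.sat u (.dia β φ) := ⟨v, huv, hs⟩
    exact .head (witnessStep_of_red (.seq α β φ) ⟨u, hwu, hsu⟩ (hp.dia β |>.dia α))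
      ((reflTransGen_witnessStep_dia α hwu hsu (hp.dia β)).trans
        (reflTransGen_witnessStep_dia β huv hs hp))
  | .union α β =>
    rcases hr with hr | hr
    · exact .head (witnessStep_of_red (.unionL α β φ) ⟨v, hr, hs⟩ (hp.dia α))
        (reflTransGen_witnessStep_dia α hr hs hp)
    · exact .head (witnessStep_of_red (.unionR α β φ) ⟨v, hr, hs⟩ (hp.dia β))
        (reflTransGen_witnessStep_dia β hr hs hp)
  | .star α =>
    induction (hr : Relation.ReflTransGen _ w v) using Relation.ReflTransGen.head_induction_on with
    | refl => exact .single (witnessStep_of_red (.star1 α φ) hs hp)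
    | @head w u hwu huv ih =>
      have hsu : M.sat u (.dia (.star α) φ) := ⟨v, huv, hs⟩
      exact .head (witnessStep_of_red (.star2 α φ) ⟨u, hwu, hsu⟩ (hp.dia _ |>.dia α))
        ((reflTransGen_witnessStep_dia α hwu hsu (hp.dia _)).trans ih)
  | .test χ =>
    obtain ⟨rfl, -⟩ := hr
    exact .single (witnessStep_of_red (.test χ φ) hs hp)

theorem exists_reflTransGen_witnessStep_dias {ψ : Fml} (L : List Prg) {w : M.W}
    (h : M.sat w (dias L ψ)) :
    ∃ v, Relation.ReflTransGen (M.WitnessStep ψ) (w, dias L ψ) (v, ψ) := by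
  induction L generalizing w with
  | nil => exact ⟨w, .refl⟩
  | cons α L ih =>
    obtain ⟨u, hwu, hu⟩ := h
    obtain ⟨v, hv⟩ := ih hu
    exact ⟨v, (reflTransGen_witnessStep_dia α hwu hu (pre_dias L ψ)).trans hv⟩

end Model

theorem witness_chain_exists (M : Model) (w : M.W) (L : List Prg) (ψ : Fml)
    (hL : L ≠ []) (h : M.sat w (dias L ψ)) :
    ∃ (n : ℕ) (ws : ℕ → M.W) (ψs : ℕ → Fml),
      IsWitnessChain M (dias L ψ) ψ w n ws ψs := by
  obtain ⟨α, L, rfl⟩ := List.exists_cons_of_ne_nil hL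
  obtain ⟨v, hreach⟩ := M.exists_reflTransGen_witnessStep_dias _ h
  obtain ⟨n, f, h0, hn, hstep, hne, hinj⟩ :=
    Relation.exists_shortest_path (p := fun q : M.W × Fml => q.2 = ψ) rfl hreach
  have hn0 : 0 < n := Nat.pos_of_ne_zero fun hn0 =>
    dias_cons_ne α L ψ (by subst hn0; simpa [h0] using hn)
  have hgood : ∀ i ≤ n, Pre ψ (f i).2 ∧ M.sat (f i).1 (f i).2 := by
    rintro (_ | i) hi
    · exact h0 ▸ ⟨pre_dias _ ψ, h⟩
    · exact ⟨(hstep i hi).2.2, (hstep i hi).2.1⟩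
  refine ⟨n, fun i => (f i).1, fun i => (f i).2, hn0, hgood, by simp [h0], by simp [h0], hn, hne,
    fun i hi j hj hij hfij => hij (hinj i hi j hj hfij), fun i hi => (hstep i hi).1.atom_or_red⟩
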